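/- Fix n ≥ 1, (h,x) ∈ ℝ² and t > 0. For all u_1,…,u_n, v_1,…,v_n ∈ ℂ with u_i ≠ v_j, u_i ≠ ±1 and v_i ≠ ±1 for all i, j, write I_n^{(h,x;t)} and Î_n^{(h,x;t)} for the integrands with parameters (h,x,t). Then under the substitution u_i ↦ -v_i, v_i ↦ -u_i together with x ↦ -x the integrands are invariant: I_n^{(h,x;t)}((u_1,…,u_n); (v_1,…,v_n)) = I_n^{(h,-x;t)}((-v_1,…,-v_n); (-u_1,…,-u_n)), and the same identity holds for Î_n. (This change-of-variables identity is the algebraic content of the symmetry p(h,x;t) = p(h,-x;t) and p̂(h,x;t) = p̂(h,-x;t).) -/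

import Mathlib

open MeasureTheory Filter

noncomputable section

/-- The left wedge contour crossing the real axis at `c`: it runs from `∞·e^{-2πi/3}`
to `∞·e^{2πi/3}` and meets the real axis at `c`. -/
def wedgeL (c : ℝ) (s : ℝ) : ℂ :=
  Complex.ofReal (c - |s| / 2) + Complex.I * Complex.ofReal (s * Real.sqrt 3 / 2)

/-- The right wedge contour crossing the real axis at `c`: the negation (as a set) of
`wedgeL (-c)`, oriented from `∞·e^{-πi/3}` to `∞·e^{πi/3}`. -/
def wedgeR (c : ℝ) (s : ℝ) : ℂ := -wedgeL (-c) (-s)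

/-- The contour `Γ_L`, crossing the real axis at `-1/2 ∈ (-1,0)`. -/
def gammaL : ℝ → ℂ := wedgeL (-1/2)

/-- The contour `Γ_R = -Γ_L`, crossing the real axis at `1/2 ∈ (0,1)`. -/
def gammaR : ℝ → ℂ := wedgeR (1/2)

/-- `f_{h,x;t}(w) = exp(-(t/3)w³ + x·w² + h·w)`. -/
def fExp (h x t : ℝ) (w : ℂ) : ℂ :=
  Complex.exp (-(t : ℂ) / 3 * w ^ 3 + (x : ℂ) * w ^ 2 + (h : ℂ) * w)

/-- `S_k(W;W') = Σ w_i^k - Σ (w'_i)^k`. -/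
def Spow {n n' : ℕ} (k : ℕ) (W : Fin n → ℂ) (W' : Fin n' → ℂ) : ℂ :=
  (∑ i, W i ^ k) - ∑ i, W' i ^ k

/-- `H(W;W') = (1/12)S₁⁴ + (1/4)S₂² - (1/3)S₁S₃`. -/
def Hfun {n n' : ℕ} (W : Fin n → ℂ) (W' : Fin n' → ℂ) : ℂ :=
  (1 / 12) * Spow 1 W W' ^ 4 + (1 / 4) * Spow 2 W W' ^ 2
    - (1 / 3) * Spow 1 W W' * Spow 3 W W'

/-- The Cauchy determinant `C(W;W') = det[1/(w_i - w'_j)]`. -/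
def CauchyDet {n : ℕ} (W W' : Fin n → ℂ) : ℂ :=
  Matrix.det (Matrix.of fun i j => 1 / (W i - W' j))

/-- The integrand `I_n(U;V)` in its explicit product form. -/
def integrandI (n : ℕ) (h x t : ℝ) (U V : Fin n → ℂ) : ℂ :=
  (-1 : ℂ) ^ n * Complex.exp (-(2 / 3 : ℂ) * (t : ℂ) + 2 * (h : ℂ)) *
    ((∏ i, ∏ j, if i < j then (U i - U j) ^ 2 * (V i - V j) ^ 2 else 1) /
      ∏ i, ∏ j, (U i - V j) ^ 2) *
    (∏ i, ((1 + V i) * (1 - U i) * fExp h x t (U i)) /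
      ((1 + U i) * (1 - V i) * fExp h x t (V i))) *
    Hfun (Fin.snoc U 1) (Fin.snoc V (-1))

/-- The integrand `Î_n(U;V) = [2/Σ(-u_i+v_i)]·I_n(U;V)`. -/
def integrandIhat (n : ℕ) (h x t : ℝ) (U V : Fin n → ℂ) : ℂ :=
  (2 / ∑ i, (-U i + V i)) * integrandI n h x t U V

/-- The `2n`-fold contour integral `∫_{Γ_L^n × Γ_R^n} F(U;V) ∏ du_i/(2πi) ∏ dv_i/(2πi)`. -/
def contourProdIntegral (n : ℕ) (F : (Fin n → ℂ) → (Fin n → ℂ) → ℂ) : ℂ :=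
  ∫ sr : (Fin n → ℝ) × (Fin n → ℝ),
    F (fun i => gammaL (sr.1 i)) (fun i => gammaR (sr.2 i)) *
      ((∏ i, deriv gammaL (sr.1 i) / (2 * Real.pi * Complex.I)) *
        ∏ i, deriv gammaR (sr.2 i) / (2 * Real.pi * Complex.I))

/-- `p(h,x;t)` as a complex series of contour integrals. -/
def pC (h x t : ℝ) : ℂ :=
  ∑' n : ℕ, (1 / (Nat.factorial (n + 1) : ℂ) ^ 2) *
    contourProdIntegral (n + 1) (integrandI (n + 1) h x t)

/-- The joint density function `p(h,x;t)`. -/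
def pFun (h x t : ℝ) : ℝ := (pC h x t).re

/-- `p̂(h,x;t)` as a complex series of contour integrals. -/
def pHatC (h x t : ℝ) : ℂ :=
  ∑' n : ℕ, (1 / (Nat.factorial (n + 1) : ℂ) ^ 2) *
    contourProdIntegral (n + 1) (integrandIhat (n + 1) h x t)

/-- The joint density function `p̂(h,x;t)`. -/
def pHatFun (h x t : ℝ) : ℝ := (pHatC h x t).re

/-! The substitution `(U, V, x) ↦ (-V, -U, -x)` exchanges the roles of `U` and `V`, so the
squared Cauchy-determinant factor is unchanged, and `f_{h,-x;t}(-w) = 1/f_{h,x;t}(w)`,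
so each rational factor `(1+v)(1-u)f(u) / ((1+u)(1-v)f(v))` is unchanged as well. On the
augmented vectors `U ⊔ (1)`, `V ⊔ (-1)` it is again the swap-and-negate map, which multiplies
`S_k` by `(-1)^(k+1)`; `H` only involves `S₁`, `S₃` and `S₂²`, hence is invariant. -/

theorem fExp_neg_neg (h x t : ℝ) (w : ℂ) : fExp h (-x) t (-w) = (fExp h x t w)⁻¹ := by
  rw [fExp, fExp, ← Complex.exp_neg]
  push_cast
  ring_nf

theorem Spow_neg_swap {n n' : ℕ} (k : ℕ) (W : Fin n → ℂ) (W' : Fin n' → ℂ) :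
    Spow k (fun i => -W' i) (fun i => -W i) = (-1) ^ (k + 1) * Spow k W W' := by
  simp only [Spow, neg_pow (W' _), neg_pow (W _), ← Finset.mul_sum]
  ring

theorem Hfun_neg_swap {n n' : ℕ} (W : Fin n → ℂ) (W' : Fin n' → ℂ) :
    Hfun (fun i => -W' i) (fun i => -W i) = Hfun W W' := by
  simp only [Hfun, Spow_neg_swap]
  ring

theorem snoc_neg {α : Type*} [Neg α] {n : ℕ} (W : Fin n → α) (a : α) :
    Fin.snoc (α := fun _ => α) (fun i => -W i) (-a) = fun i => -Fin.snoc (α := fun _ => α) W a i :=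
  (Fin.comp_snoc Neg.neg W a).symm

theorem prod_offDiag_neg_swap {ι R : Type*} [Fintype ι] [LT ι] [DecidableRel (α := ι) (· < ·)]
    [CommRing R] (U V : ι → R) :
    (∏ i, ∏ j, if i < j then (-V i - -V j) ^ 2 * (-U i - -U j) ^ 2 else 1) =
      ∏ i, ∏ j, if i < j then (U i - U j) ^ 2 * (V i - V j) ^ 2 else 1 := by
  congr! 3 with i - j -
  ring

theorem prod_sq_sub_neg_swap {ι R : Type*} [Fintype ι] [CommRing R] (U V : ι → R) :
    ∏ i, ∏ j, (-V i - -U j) ^ 2 = ∏ i, ∏ j, (U i - V j) ^ 2 := by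
  rw [Finset.prod_comm]
  congr! 3 with i - j -
  ring

theorem integrandI_neg_swap (n : ℕ) (h x t : ℝ) (U V : Fin n → ℂ) :
    integrandI n h x t U V = integrandI n h (-x) t (fun i => -V i) (fun i => -U i) := by
  have hH : Hfun (Fin.snoc (fun i => -V i) 1) (Fin.snoc (fun i => -U i) (-1)) =
      Hfun (Fin.snoc U 1) (Fin.snoc V (-1)) := by
    rw [← neg_neg (1 : ℂ), snoc_neg, snoc_neg, neg_neg, Hfun_neg_swap]
  simp only [integrandI, prod_offDiag_neg_swap, prod_sq_sub_neg_swap, fExp_neg_neg, hH]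
  congr 2
  refine Finset.prod_congr rfl fun i _ => ?_
  simp only [div_eq_mul_inv, mul_inv, inv_inv]
  ring

theorem integrandIhat_neg_swap (n : ℕ) (h x t : ℝ) (U V : Fin n → ℂ) :
    integrandIhat n h x t U V = integrandIhat n h (-x) t (fun i => -V i) (fun i => -U i) := by
  rw [integrandIhat, integrandIhat, ← integrandI_neg_swap]
  congr 2
  exact Finset.sum_congr rfl fun i _ => by ring

theorem integrand_symmetry_general (n : ℕ) (h x t : ℝ)
    (U V : Fin n → ℂ) :
    integrandI n h x t U V =
      integrandI n h (-x) t (fun i => -V i) (fun i => -U i) ∧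
    integrandIhat n h x t U V =
      integrandIhat n h (-x) t (fun i => -V i) (fun i => -U i) :=
  ⟨integrandI_neg_swap n h x t U V, integrandIhat_neg_swap n h x t U V⟩

/-- Under `u_i ↦ -v_i`, `v_i ↦ -u_i`, `x ↦ -x` the integrands `I_n` and
`Î_n` are invariant. -/
theorem integrand_symmetry (n : ℕ) (hn : 1 ≤ n) (h x t : ℝ) (ht : 0 < t)
    (U V : Fin n → ℂ) (hUV : ∀ i j, U i ≠ V j)
    (hU1 : ∀ i, U i ≠ 1) (hU1' : ∀ i, U i ≠ -1)
    (hV1 : ∀ i, V i ≠ 1) (hV1' : ∀ i, V i ≠ -1) :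
    integrandI n h x t U V =
      integrandI n h (-x) t (fun i => -V i) (fun i => -U i) ∧
    integrandIhat n h x t U V =
      integrandIhat n h (-x) t (fun i => -V i) (fun i => -U i) :=
  integrand_symmetry_general n h x t U V

end
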